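/- arXiv:1803.06510 — 3 statements merged into one kernel-verified Lean document; each statement's English description precedes it below -/
import Mathlib

section
/- For any integer m ≥ 4, the sum ∑_{t=1}^{m} (t/(3m))^t is at most 1.5/m. -/
open Finset

theorem stmt_0 (m : ℕ) (hm : 4 ≤ m) :
    ∑ t ∈ Finset.Icc 1 m, ((t : ℝ) / (3 * m)) ^ t ≤ 1.5 / m := by
  have hm0 : (0:ℝ) < m := by
    have : (4:ℝ) ≤ m := by exact_mod_cast hm
    linarith
  -- series bound
  have hS : HasSum (fun n : ℕ => ((n:ℝ)+1) * (1/3)^n) (9/4) := by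
    have h1 := hasSum_coe_mul_geometric_of_norm_lt_one (r := (1/3:ℝ)) (by norm_num)
    have h2 := hasSum_geometric_of_lt_one (r := (1/3:ℝ)) (by norm_num) (by norm_num)
    have heq : (fun n : ℕ => ((n:ℝ)+1)*(1/3)^n) = fun n : ℕ => (n:ℝ)*(1/3)^n + (1/3)^n := by
      funext n; ring
    rw [heq, show (9/4:ℝ) = 1/3/(1-1/3)^2 + (1-1/3)⁻¹ by norm_num]
    exact h1.add h2
  have hB : ∑ n ∈ Finset.range m, ((n:ℝ)+1) * (1/3)^n ≤ 9/4 := by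
    refine sum_le_hasSum _ (fun i _ => by positivity) hS
  -- termwise bound
  have hstep : ∑ t ∈ Finset.Icc 1 m, ((t : ℝ) / (3 * m)) ^ t ≤
      ∑ t ∈ Finset.Icc 1 m, (1/(3*m)) * ((t:ℝ) * (1/3)^(t-1)) := by
    apply Finset.sum_le_sum
    intro t ht
    rw [Finset.mem_Icc] at ht
    obtain ⟨ht1, htm⟩ := ht
    have hx0 : (0:ℝ) ≤ (t:ℝ) / (3*m) := by positivity
    have hx3 : (t:ℝ) / (3*m) ≤ 1/3 := by
      rw [div_le_div_iff₀ (by positivity) (by norm_num)]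
      have : (t:ℝ) ≤ m := by exact_mod_cast htm
      linarith
    calc ((t : ℝ) / (3 * m)) ^ t = ((t:ℝ)/(3*m)) * ((t:ℝ)/(3*m))^(t-1) := by
          rw [← pow_succ']
          congr 1
          omega
      _ ≤ ((t:ℝ)/(3*m)) * (1/3)^(t-1) := by
          apply mul_le_mul_of_nonneg_left _ hx0
          exact pow_le_pow_left₀ hx0 hx3 _
      _ = (1/(3*m)) * ((t:ℝ) * (1/3)^(t-1)) := by ring
  have hre : ∑ t ∈ Finset.Icc 1 m, (1/(3*m)) * ((t:ℝ) * (1/3)^(t-1)) =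
      (1/(3*m)) * ∑ n ∈ Finset.range m, ((n:ℝ)+1) * (1/3)^n := by
    rw [Finset.mul_sum, show Finset.Icc 1 m = Finset.Ico 1 (m+1) by rfl, Finset.sum_Ico_eq_sum_range]
    apply Finset.sum_congr (by congr 1)
    intro n _
    have h1n : 1 + n - 1 = n := by omega
    rw [h1n]
    push_cast
    ring
  have : ∑ t ∈ Finset.Icc 1 m, ((t : ℝ) / (3 * m)) ^ t ≤ (1/(3*m)) * (9/4) := by
    rw [hre] at hstep
    refine hstep.trans ?_
    apply mul_le_mul_of_nonneg_left hB (by positivity)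
  refine this.trans ?_
  have h34 : 1/(3*(m:ℝ))*(9/4) = (3/4)/m := by field_simp; ring
  rw [h34]
  gcongr
  norm_num
end

section
/- With the setup of the balanced clustering SDP (true clusters C*_1,…,C*_k of size ℓ, Y feasible with Y ⪰ 0, Y ≥ 0, diag(Y) = 1, Y·1_n = ℓ·1_n), let μ_1,…,μ_k ∈ ℝ^d be the cluster centers, Δ_{ab} := ‖μ_a − μ_b‖₂, and Δ := min_{a≠b} Δ_{ab}. Define S₄ := ⟨Y − Y*, E[HHᵀ]⟩ where (E[HHᵀ])_{ij} = ⟨μ_{σ*(i)}, μ_{σ*(j)}⟩ for i ≠ j and the diagonal of Y − Y* is zero. Then S₄ = −(1/2) ∑_{a≠b} T_{ab} Δ_{ab}² ≤ −(1/4) Δ² ‖Y − Y*‖₁, where T_{ab} := ∑_{i∈C*_a, j∈C*_b} (Y − Y*)_{ij}. -/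
/-!
Because `Y - Y*` has zero row and column sums, polarization
`⟪x, y⟫ = (‖x‖² + ‖y‖² - ‖x - y‖²) / 2` turns `S₄` into `-(1/2) ∑ T_ab Δ_ab²`.
Off the diagonal blocks `Y - Y* = Y ≥ 0`, on them `Y - Y* = Y - 1 ≤ 0` (a psd matrix with unit
diagonal has entries at most `1`). Since all entries of `Y - Y*` sum to zero, the diagonal blocks
carry as much `ℓ₁` mass as the off-diagonal ones, so `‖Y - Y*‖₁ = 2 ∑_{a ≠ b} T_ab`, and
`Δ_ab ≥ Δ` gives the bound.
-/

open Finset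

theorem Matrix.PosSemidef.two_mul_apply_le_add_diag {ι : Type*} [Fintype ι] [DecidableEq ι]
    {A : Matrix ι ι ℝ} (hA : A.PosSemidef) (i j : ι) : 2 * A i j ≤ A i i + A j j := by
  rcases eq_or_ne i j with rfl | hij
  · linarith
  have hq := hA.dotProduct_mulVec_nonneg (Pi.single i 1 - Pi.single j 1)
  have hji : A j i = A i j := hA.isHermitian.apply i j
  simp only [dotProduct, Pi.star_apply, Pi.sub_apply, Pi.single_apply, star_trivial,
    Matrix.mulVec, mul_sub, mul_ite, mul_one, mul_zero, sum_sub_distrib, sum_ite_eq', mem_univ,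
    ↓reduceIte, sub_mul, ite_mul, one_mul, zero_mul, sub_nonneg, tsub_le_iff_right] at hq
  linarith

theorem sum_sum_mul_inner_eq_neg_half_sum_sum_mul_norm_sub_sq {ι E : Type*} [Fintype ι]
    [NormedAddCommGroup E] [InnerProductSpace ℝ E] {D : ι → ι → ℝ}
    (hrow : ∀ i, ∑ j, D i j = 0) (hcol : ∀ j, ∑ i, D i j = 0) (x : ι → E) :
    ∑ i, ∑ j, D i j * inner ℝ (x i) (x j) = -(1 / 2) * ∑ i, ∑ j, D i j * ‖x i - x j‖ ^ 2 := by
  have hleft : ∑ i, ∑ j, D i j * ‖x i‖ ^ 2 = 0 := by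
    simp [← sum_mul, hrow]
  have hright : ∑ i, ∑ j, D i j * ‖x j‖ ^ 2 = 0 := by
    rw [sum_comm]; simp [← sum_mul, hcol]
  simp only [norm_sub_sq_real, mul_add, mul_sub, sum_add_distrib, sum_sub_distrib, hleft,
    hright]
  simp only [mul_left_comm _ (2 : ℝ), ← mul_sum]
  ring

section BlockSums

variable {ι κ : Type*} [Fintype ι] [DecidableEq κ]

def blockSum (σ : ι → κ) (D : ι → ι → ℝ) (a b : κ) : ℝ :=
  ∑ i ∈ univ.filter (fun i => σ i = a), ∑ j ∈ univ.filter (fun j => σ j = b), D i j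

theorem blockSum_nonneg_of_ne (σ : ι → κ) {D : ι → ι → ℝ}
    (hD : ∀ i j, σ i ≠ σ j → 0 ≤ D i j) {a b : κ} (hab : a ≠ b) : 0 ≤ blockSum σ D a b :=
  sum_nonneg fun i hi => sum_nonneg fun j hj =>
    hD i j (by rw [(mem_filter.1 hi).2, (mem_filter.1 hj).2]; exact hab)

variable [Fintype κ]

theorem sum_sum_mul_comp_eq_sum_sum_blockSum_mul (σ : ι → κ) (D : ι → ι → ℝ)
    (f : κ → κ → ℝ) :
    ∑ i, ∑ j, D i j * f (σ i) (σ j) = ∑ a, ∑ b, blockSum σ D a b * f a b := by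
  have hblock : ∀ a b, blockSum σ D a b * f a b = ∑ i ∈ univ.filter (fun i => σ i = a),
      ∑ j ∈ univ.filter (fun j => σ j = b), D i j * f (σ i) (σ j) := by
    intro a b
    simp only [blockSum, sum_mul]
    refine sum_congr rfl fun i hi => sum_congr rfl fun j hj => ?_
    rw [(mem_filter.1 hi).2, (mem_filter.1 hj).2]
  simp only [hblock]
  rw [← sum_fiberwise univ σ (fun i => ∑ j, D i j * f (σ i) (σ j))]
  refine sum_congr rfl fun a _ => ?_
  exact (sum_comm.trans
    (sum_congr rfl fun i _ => sum_fiberwise univ σ fun j => D i j * f (σ i) (σ j))).symm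

theorem sum_sum_blockSum (σ : ι → κ) (D : ι → ι → ℝ) :
    ∑ a, ∑ b, blockSum σ D a b = ∑ i, ∑ j, D i j := by
  simpa using (sum_sum_mul_comp_eq_sum_sum_blockSum_mul σ D (fun _ _ => 1)).symm

theorem sum_sum_abs_eq_two_mul_sum_sum_blockSum_of_ne (σ : ι → κ) {D : ι → ι → ℝ}
    (hsum : ∑ i, ∑ j, D i j = 0) (hin : ∀ i j, σ i = σ j → D i j ≤ 0)
    (hout : ∀ i j, σ i ≠ σ j → 0 ≤ D i j) :
    ∑ i, ∑ j, |D i j| = 2 * ∑ a, ∑ b ∈ univ.filter (fun b => b ≠ a), blockSum σ D a b := by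
  have hsplit : ∀ a (f : κ → ℝ), ∑ b, f b = f a + ∑ b ∈ univ.filter (fun b => b ≠ a), f b :=
    fun a f => by rw [filter_ne', add_sum_erase _ _ (mem_univ a)]
  have hdiag : ∑ a, blockSum σ D a a
      = -∑ a, ∑ b ∈ univ.filter (fun b => b ≠ a), blockSum σ D a b := by
    have := sum_sum_blockSum σ D
    rw [sum_congr rfl fun a _ => hsplit a (blockSum σ D a), sum_add_distrib, hsum] at this
    linarith
  have habs : ∀ i j, |D i j| = D i j * if σ i = σ j then -1 else 1 := by
    intro i j
    split_ifs with h
    · rw [abs_of_nonpos (hin i j h), mul_neg_one]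
    · rw [abs_of_nonneg (hout i j h), mul_one]
  have hrow : ∀ a, ∑ b, blockSum σ D a b * (if a = b then -1 else 1)
      = -blockSum σ D a a + ∑ b ∈ univ.filter (fun b => b ≠ a), blockSum σ D a b := by
    intro a
    rw [hsplit a, if_pos rfl, mul_neg_one]
    congr 1
    exact sum_congr rfl fun b hb => by rw [if_neg (mem_filter.1 hb).2.symm, mul_one]
  calc ∑ i, ∑ j, |D i j|
      = ∑ a, ∑ b, blockSum σ D a b * (if a = b then -1 else 1) := by
        rw [← sum_sum_mul_comp_eq_sum_sum_blockSum_mul]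
        exact sum_congr rfl fun i _ => sum_congr rfl fun j _ => habs i j
    _ = 2 * ∑ a, ∑ b ∈ univ.filter (fun b => b ≠ a), blockSum σ D a b := by
        rw [sum_congr rfl fun a _ => hrow a, sum_add_distrib, sum_neg_distrib, hdiag]
        ring

end BlockSums

theorem sum_sum_mul_inner_comp_eq_neg_half_sum_sum_blockSum {ι κ E : Type*} [Fintype ι]
    [Fintype κ] [DecidableEq κ] [NormedAddCommGroup E] [InnerProductSpace ℝ E] (σ : ι → κ)
    {D : ι → ι → ℝ} (hrow : ∀ i, ∑ j, D i j = 0) (hcol : ∀ j, ∑ i, D i j = 0) (μ : κ → E) :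
    ∑ i, ∑ j, D i j * inner ℝ (μ (σ i)) (μ (σ j))
      = -(1 / 2) * ∑ a, ∑ b ∈ univ.filter (fun b => b ≠ a),
          blockSum σ D a b * ‖μ a - μ b‖ ^ 2 := by
  rw [sum_sum_mul_inner_eq_neg_half_sum_sum_mul_norm_sub_sq hrow hcol (fun i => μ (σ i)),
    sum_sum_mul_comp_eq_sum_sum_blockSum_mul σ D fun a b => ‖μ a - μ b‖ ^ 2]
  congr 1
  refine sum_congr rfl fun a _ => (sum_filter_of_ne fun b _ hb => ?_).symm
  rintro rfl
  simp at hb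

theorem sum_ite_eq_one_comp_eq_card {ι κ : Type*} [Fintype ι] [DecidableEq κ] (σ : ι → κ)
    (i : ι) :
    ∑ j, (if σ i = σ j then (1 : ℝ) else 0) = (univ.filter fun j => σ j = σ i).card := by
  simp only [sum_boole, eq_comm]

theorem stmt_7_general (k l d : ℕ) (n : ℕ)
    (σ : Fin n → Fin k)
    (hbal : ∀ a : Fin k, (Finset.univ.filter (fun i => σ i = a)).card = l)
    (Ystar : Matrix (Fin n) (Fin n) ℝ)
    (hYstar : ∀ i j, Ystar i j = if σ i = σ j then 1 else 0)
    (Y : Matrix (Fin n) (Fin n) ℝ)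
    (hpsd : Y.PosSemidef) (hnonneg : ∀ i j, 0 ≤ Y i j)
    (hdiag : ∀ i, Y i i = 1) (hrow : ∀ i, ∑ j, Y i j = (l : ℝ))
    (μ : Fin k → EuclideanSpace ℝ (Fin d)) (Δ : ℝ) (hΔ0 : 0 ≤ Δ)
    (hΔ : ∀ a b, a ≠ b → Δ ≤ ‖μ a - μ b‖)
    (T : Fin k → Fin k → ℝ)
    (hT : ∀ a b, T a b = ∑ i ∈ Finset.univ.filter (fun i => σ i = a),
        ∑ j ∈ Finset.univ.filter (fun j => σ j = b), (Y i j - Ystar i j))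
    (S₄ : ℝ)
    (hS₄ : S₄ = ∑ i, ∑ j, (Y i j - Ystar i j) * (inner ℝ (μ (σ i)) (μ (σ j)) : ℝ)) :
    S₄ = -(1 / 2) * ∑ a, ∑ b ∈ Finset.univ.filter (fun b => b ≠ a), T a b * ‖μ a - μ b‖ ^ 2 ∧
    S₄ ≤ -(1 / 4) * Δ ^ 2 * (∑ i, ∑ j, |Y i j - Ystar i j|) := by
  set D : Fin n → Fin n → ℝ := fun i j => Y i j - Ystar i j with hD
  obtain rfl : T = blockSum σ D := funext₂ hT
  have hDrow : ∀ i, ∑ j, D i j = 0 := fun i => by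
    simp only [hD, sum_sub_distrib, hrow, hYstar, sum_ite_eq_one_comp_eq_card, hbal, sub_self]
  have hDsymm : ∀ i j, D j i = D i j := fun i j => by
    have hY : Y j i = Y i j := by simpa using hpsd.isHermitian.apply i j
    simp only [hD, hYstar, eq_comm (a := σ j), hY]
  have hDcol : ∀ j, ∑ i, D i j = 0 := fun j => by simpa only [hDsymm] using hDrow j
  have hin : ∀ i j, σ i = σ j → D i j ≤ 0 := fun i j hij => by
    simp only [hD, hYstar, if_pos hij]
    linarith [hpsd.two_mul_apply_le_add_diag i j, hdiag i, hdiag j]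
  have hout : ∀ i j, σ i ≠ σ j → 0 ≤ D i j := fun i j hij => by
    simpa only [hD, hYstar, if_neg hij, sub_zero] using hnonneg i j
  have hS₄' := hS₄.trans (sum_sum_mul_inner_comp_eq_neg_half_sum_sum_blockSum σ hDrow hDcol μ)
  refine ⟨hS₄', ?_⟩
  have hsep : (∑ a, ∑ b ∈ univ.filter (fun b => b ≠ a), blockSum σ D a b) * Δ ^ 2
      ≤ ∑ a, ∑ b ∈ univ.filter (fun b => b ≠ a), blockSum σ D a b * ‖μ a - μ b‖ ^ 2 := by
    simp only [sum_mul]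
    gcongr with a _ b hb
    · exact blockSum_nonneg_of_ne σ hout (mem_filter.1 hb).2.symm
    · exact hΔ a b (mem_filter.1 hb).2.symm
  rw [hS₄', sum_sum_abs_eq_two_mul_sum_sum_blockSum_of_ne σ (sum_eq_zero fun i _ => hDrow i)
    hin hout]
  linarith

theorem stmt_7 (k l d : ℕ) (hk : 2 ≤ k) (hl : 1 ≤ l) (n : ℕ) (hn : n = k * l)
    (σ : Fin n → Fin k)
    (hbal : ∀ a : Fin k, (Finset.univ.filter (fun i => σ i = a)).card = l)
    (Ystar : Matrix (Fin n) (Fin n) ℝ)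
    (hYstar : ∀ i j, Ystar i j = if σ i = σ j then 1 else 0)
    (Y : Matrix (Fin n) (Fin n) ℝ)
    (hpsd : Y.PosSemidef) (hnonneg : ∀ i j, 0 ≤ Y i j)
    (hdiag : ∀ i, Y i i = 1) (hrow : ∀ i, ∑ j, Y i j = (l : ℝ))
    (μ : Fin k → EuclideanSpace ℝ (Fin d)) (Δ : ℝ) (hΔ0 : 0 ≤ Δ)
    (hΔ : ∀ a b, a ≠ b → Δ ≤ ‖μ a - μ b‖)
    (T : Fin k → Fin k → ℝ)
    (hT : ∀ a b, T a b = ∑ i ∈ Finset.univ.filter (fun i => σ i = a),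
        ∑ j ∈ Finset.univ.filter (fun j => σ j = b), (Y i j - Ystar i j))
    (S₄ : ℝ)
    (hS₄ : S₄ = ∑ i, ∑ j, (Y i j - Ystar i j) * (inner ℝ (μ (σ i)) (μ (σ j)) : ℝ)) :
    S₄ = -(1 / 2) * ∑ a, ∑ b ∈ Finset.univ.filter (fun b => b ≠ a), T a b * ‖μ a - μ b‖ ^ 2 ∧
    S₄ ≤ -(1 / 4) * Δ ^ 2 * (∑ i, ∑ j, |Y i j - Ystar i j|) :=
  stmt_7_general k l d n σ hbal Ystar hYstar Y hpsd hnonneg hdiag hrow μ Δ hΔ0 hΔ T hT S₄ hS₄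
end

section
/- Let {B_t}_{t≥1} be a family of disjoint subsets of [n] whose union is [n], each of size at most ℓ = n/k, and suppose there is an injection π' from [k] into the index set such that ∑_{a∈[k]} |C*_a ∩ B_{π'(a)}| ≥ (1 − ε)n, where C*_1,…,C*_k is a partition of [n] into sets of size ℓ. If U_1,…,U_k are obtained by selecting the k largest sets among {B_t} and distributing the remaining elements among them arbitrarily (so each |U_t| = ℓ), then there exists a permutation π of [k] with ∑_{a∈[k]} |C*_a ∩ U_{π(a)}| ≥ (1 − 2ε)n. -/
open Finset

theorem stmt_18 (n k l : ℕ) (hk : 1 ≤ k) (hl : 1 ≤ l) (hn : n = k * l)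
    (T : ℕ) (B : Fin T → Finset (Fin n))
    (hBdisj : ∀ s t : Fin T, s ≠ t → Disjoint (B s) (B t))
    (hBcover : ∀ i : Fin n, ∃ t, i ∈ B t)
    (hBcard : ∀ t, (B t).card ≤ l)
    (C : Fin k → Finset (Fin n))
    (hCdisj : ∀ a b : Fin k, a ≠ b → Disjoint (C a) (C b))
    (hCcover : ∀ i : Fin n, ∃ a, i ∈ C a)
    (hCcard : ∀ a, (C a).card = l)
    (ε : ℝ) (hε0 : 0 ≤ ε) (hε1 : ε < 1)
    (π' : Fin k → Fin T) (hπ' : Function.Injective π')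
    (happrox : (1 - ε) * n ≤ ∑ a, ((C a ∩ B (π' a)).card : ℝ))
    (ρ : Fin k → Fin T) (hρ : Function.Injective ρ)
    (hlargest : ∀ (a : Fin k) (t : Fin T), t ∉ Set.range ρ → (B t).card ≤ (B (ρ a)).card)
    (U : Fin k → Finset (Fin n))
    (hUsub : ∀ a, B (ρ a) ⊆ U a)
    (hUdisj : ∀ a b : Fin k, a ≠ b → Disjoint (U a) (U b))
    (hUcover : ∀ i : Fin n, ∃ a, i ∈ U a)
    (hUcard : ∀ a, (U a).card = l) :
    ∃ π : Equiv.Perm (Fin k), (1 - 2 * ε) * n ≤ ∑ a, ((C a ∩ U (π a)).card : ℝ) := by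
  classical
  -- p a : the set matched to C a is among the selected (largest) sets
  set p : Fin k → Prop := fun a => ∃ b, ρ b = π' a with hp
  have hσ0inj : Function.Injective (fun a : {a : Fin k // p a} => Classical.choose a.2) := by
    intro a b h
    have ha := Classical.choose_spec a.2
    have hb := Classical.choose_spec b.2
    have : π' a.1 = π' b.1 := by rw [← ha, ← hb]; simp only at h; rw [h]
    exact Subtype.ext (hπ' this)
  let e := Equiv.ofInjective _ hσ0inj
  let π : Equiv.Perm (Fin k) := e.extendSubtype
  have hρπ : ∀ a (ha : p a), ρ (π a) = π' a := by
    intro a ha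
    have h1 : π a = (e ⟨a, ha⟩ : Fin k) := e.extendSubtype_apply_of_mem a ha
    have h2 : (e ⟨a, ha⟩ : Fin k) = Classical.choose ha := rfl
    rw [h1, h2]
    exact Classical.choose_spec ha
  have hne : ∀ a b, ¬ p b → π' a ≠ ρ (π b) := by
    intro a b hb h
    by_cases ha : p a
    · have h1 : ρ (π a) = π' a := hρπ a ha
      have hab : π a = π b := hρ (h1.trans h)
      have : a = b := π.injective hab
      exact hb (this ▸ ha)
    · exact ha ⟨π b, h.symm⟩
  refine ⟨π, ?_⟩
  -- the combined disjoint family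
  set D : Fin k → Finset (Fin n) :=
    fun a => (C a ∩ B (π' a)) ∪ (if p a then ∅ else B (ρ (π a))) with hD
  have hDcard : ∀ a, (D a).card =
      (C a ∩ B (π' a)).card + (if p a then 0 else (B (ρ (π a))).card) := by
    intro a
    by_cases ha : p a
    · simp [hD, ha]
    · have hdisj : Disjoint (C a ∩ B (π' a)) (B (ρ (π a))) :=
        (hBdisj _ _ (hne a a ha)).mono inter_subset_right le_rfl
      simp [hD, ha, card_union_of_disjoint hdisj]
  have hDdisj : ∀ a ∈ (univ : Finset (Fin k)), ∀ b ∈ (univ : Finset (Fin k)),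
      a ≠ b → Disjoint (D a) (D b) := by
    intro a _ b _ hab
    simp only [hD]
    apply Finset.disjoint_union_left.2
    constructor
    · apply Finset.disjoint_union_right.2
      refine ⟨(hCdisj a b hab).mono inter_subset_left inter_subset_left, ?_⟩
      by_cases hb : p b
      · simp [hb]
      · simpa [hb] using (hBdisj _ _ (hne a b hb)).mono inter_subset_right le_rfl
    · apply Finset.disjoint_union_right.2
      constructor
      · by_cases ha : p a
        · simp [ha]
        · simpa [ha] using
            ((hBdisj _ _ (hne b a ha)).mono inter_subset_right le_rfl).symm
      · by_cases ha : p a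
        · simp [ha]
        · by_cases hb : p b
          · simp [hb]
          · simpa [ha, hb] using
              hBdisj _ _ (fun h => hab (π.injective (hρ h)))
  have hsumD : ∑ a, (D a).card ≤ n := by
    calc ∑ a, (D a).card = (univ.biUnion D).card := (Finset.card_biUnion hDdisj).symm
      _ ≤ (univ : Finset (Fin n)).card := card_le_card (subset_univ _)
      _ = n := by simp
  have h2 : (∑ a, (C a ∩ B (π' a)).card) +
      ∑ a ∈ univ.filter (fun a => ¬ p a), (B (ρ (π a))).card ≤ n := by
    have : ∑ a ∈ univ.filter (fun a => ¬ p a), (B (ρ (π a))).card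
        = ∑ a, (if p a then 0 else (B (ρ (π a))).card) := by
      rw [Finset.sum_filter]
      apply Finset.sum_congr rfl
      intro a _
      by_cases ha : p a <;> simp [ha]
    rw [this, ← Finset.sum_add_distrib]
    calc ∑ a, ((C a ∩ B (π' a)).card + if p a then 0 else (B (ρ (π a))).card)
        = ∑ a, (D a).card := by
          apply Finset.sum_congr rfl; intro a _; rw [hDcard]
      _ ≤ n := hsumD
  -- unmatched terms are dominated by the corresponding large-set sizes
  have h3 : ∀ a ∈ univ.filter (fun a => ¬ p a),
      (C a ∩ B (π' a)).card ≤ (B (ρ (π a))).card := by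
    intro a ha
    have hanot : ¬ p a := (Finset.mem_filter.1 ha).2
    have hnr : π' a ∉ Set.range ρ := by
      intro h; exact hanot h
    calc (C a ∩ B (π' a)).card ≤ (B (π' a)).card := card_le_card inter_subset_right
      _ ≤ (B (ρ (π a))).card := hlargest (π a) (π' a) hnr
  -- matched terms carry over to U
  have h4 : ∑ a ∈ univ.filter p, (C a ∩ B (π' a)).card
      ≤ ∑ a, (C a ∩ U (π a)).card := by
    calc ∑ a ∈ univ.filter p, (C a ∩ B (π' a)).card
        ≤ ∑ a ∈ univ.filter p, (C a ∩ U (π a)).card := by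
          apply Finset.sum_le_sum
          intro a ha
          have hap : p a := (Finset.mem_filter.1 ha).2
          apply card_le_card
          apply inter_subset_inter le_rfl
          rw [← hρπ a hap]
          exact hUsub (π a)
      _ ≤ ∑ a, (C a ∩ U (π a)).card :=
          Finset.sum_le_sum_of_subset (filter_subset _ _)
  -- now assemble over ℝ
  have hsplit : (∑ a, (C a ∩ B (π' a)).card)
      = (∑ a ∈ univ.filter p, (C a ∩ B (π' a)).card)
        + ∑ a ∈ univ.filter (fun a => ¬ p a), (C a ∩ B (π' a)).card :=
    (Finset.sum_filter_add_sum_filter_not _ _ _).symm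
  have h3' : ∑ a ∈ univ.filter (fun a => ¬ p a), (C a ∩ B (π' a)).card
      ≤ ∑ a ∈ univ.filter (fun a => ¬ p a), (B (ρ (π a))).card :=
    Finset.sum_le_sum h3
  set Sa := ∑ a, (C a ∩ B (π' a)).card with hSa
  set SS := ∑ a ∈ univ.filter p, (C a ∩ B (π' a)).card with hSS
  set ScA := ∑ a ∈ univ.filter (fun a => ¬ p a), (C a ∩ B (π' a)).card with hScA
  set ScE := ∑ a ∈ univ.filter (fun a => ¬ p a), (B (ρ (π a))).card with hScE
  set Tg := ∑ a, (C a ∩ U (π a)).card with hTg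
  have r1 : (1 - ε) * n ≤ (Sa : ℝ) := by
    rw [hSa]; push_cast; exact happrox
  have r2 : (Sa : ℝ) + (ScE : ℝ) ≤ (n : ℝ) := by exact_mod_cast h2
  have r3 : (ScA : ℝ) ≤ (ScE : ℝ) := by exact_mod_cast h3'
  have r4 : (Sa : ℝ) = (SS : ℝ) + (ScA : ℝ) := by exact_mod_cast hsplit
  have r5 : (SS : ℝ) ≤ (Tg : ℝ) := by exact_mod_cast h4
  have rTg : (Tg : ℝ) = ∑ a, ((C a ∩ U (π a)).card : ℝ) := by rw [hTg]; push_cast; rfl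
  rw [← rTg]
  nlinarith [r1, r2, r3, r4, r5]
end
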